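/- Let f(x) = N x^{N-1} / D for constants N ∈ ℕ₊ and D > 0, and let p, k, γ̄ > 0. Then p ∫₀^∞ f(x) Q(√(k x γ̄)) dx = p (2N-1)!! / (2 D (k γ̄)^N), where Q is the Gaussian Q-function. -/

import Mathlib

open MeasureTheory Set

lemma aux_df (n : ℕ) : Nat.doubleFactorial (2*n+1) = (2*n+1) * Nat.doubleFactorial (2*n-1) := by
  cases n with
  | zero => rfl
  | succ k =>
    rw [show 2*(k+1)+1 = (2*k+1)+2 by ring, Nat.doubleFactorial_add_two,
        show (2*(k+1)-1 : ℕ) = 2*k+1 by omega, show (2*k+1)+2 = 2*(k+1)+1 by ring]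

lemma aux_gamma (n : ℕ) :
    Real.Gamma ((n:ℝ) + 1/2) = (Nat.doubleFactorial (2*n-1) : ℝ) * Real.sqrt Real.pi / 2^n := by
  induction n with
  | zero => rw [show ((0:ℕ):ℝ) + 1/2 = 1/2 by norm_num, Real.Gamma_one_half_eq]; norm_num
  | succ k ih =>
    have h0 : (((k+1:ℕ)):ℝ) + 1/2 = ((k:ℝ) + 1/2) + 1 := by push_cast; ring
    rw [h0, Real.Gamma_add_one (by positivity), ih,
        show (2*(k+1)-1 : ℕ) = 2*k+1 by omega, aux_df k]
    push_cast
    field_simp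
    ring

lemma aux_moment (m : ℕ) :
    ∫ v in Ioi (0:ℝ), v^(2*m+2) * Real.exp (-v^2/2)
      = Real.sqrt (2*Real.pi) * (Nat.doubleFactorial (2*m+1) : ℝ) / 2 := by
  have hq : (-1:ℝ) < 2*(m:ℝ)+2 := by
    have := Nat.cast_nonneg (α := ℝ) m
    linarith
  have h := integral_rpow_mul_exp_neg_mul_rpow (p := 2) (q := 2*(m:ℝ)+2) (b := 1/2)
    two_pos hq (by norm_num)
  have hL : ∫ x in Ioi (0:ℝ), x ^ (2*(m:ℝ)+2) * Real.exp (-(1/2) * x ^ (2:ℝ))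
      = ∫ v in Ioi (0:ℝ), v^(2*m+2) * Real.exp (-v^2/2) := by
    refine setIntegral_congr_fun measurableSet_Ioi (fun x hx => ?_)
    rw [show (2*(m:ℝ)+2) = ((2*m+2 : ℕ):ℝ) by push_cast; ring, Real.rpow_natCast,
        show (2:ℝ) = ((2:ℕ):ℝ) by norm_cast, Real.rpow_natCast]
    congr 1
    ring
  rw [hL] at h
  rw [h]
  have hgam : (2*(m:ℝ)+2+1)/2 = ((m+1:ℕ):ℝ) + 1/2 := by push_cast; ring
  rw [hgam, aux_gamma (m+1), show (2*(m+1)-1:ℕ) = 2*m+1 by omega]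
  have hpow : (1/2 : ℝ) ^ (-(2*(m:ℝ)+2+1)/2) = 2^(m+1) * Real.sqrt 2 := by
    rw [show (-(2*(m:ℝ)+2+1)/2) = -((((m+1:ℕ)):ℝ) + 1/2) by push_cast; ring,
        one_div, Real.inv_rpow (by norm_num), Real.rpow_neg (by norm_num), inv_inv,
        Real.rpow_add (by norm_num), Real.rpow_natCast, Real.sqrt_eq_rpow, one_div]
  rw [hpow, Real.sqrt_mul (by norm_num)]
  have h2 : (0:ℝ) < 2^(m+1) := by positivity
  field_simp

lemma aux_key (m : ℕ) {a : ℝ} (ha : 0 < a) :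
    ∫ x in Ioi (0:ℝ), ((m:ℝ)+1) * x^m * ∫ v in Ioi (Real.sqrt (a*x)), Real.exp (-v^2/2)
      = Real.sqrt (2*Real.pi) * (Nat.doubleFactorial (2*m+1) : ℝ) / (2 * a^(m+1)) := by
  set W : ℝ → ENNReal := fun v => ENNReal.ofReal (Real.exp (-v^2/2)) with hW
  set Φ : ℝ → ENNReal := fun x => ENNReal.ofReal (((m:ℝ)+1) * x^m) with hΦ
  have hexp_int : ∀ t : ℝ, IntegrableOn (fun v => Real.exp (-v^2/2)) (Ioi t) := by
    intro t
    have h := (integrable_exp_neg_mul_sq (b := (1/2:ℝ)) (by norm_num)).integrableOn (s := Ioi t)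
    refine h.congr_fun (fun v _ => ?_) measurableSet_Ioi
    congr 1
    ring
  have hE0 : ∀ t : ℝ, 0 ≤ ∫ v in Ioi t, Real.exp (-v^2/2) :=
    fun t => setIntegral_nonneg measurableSet_Ioi fun v _ => (Real.exp_pos _).le
  have hanti : Antitone (fun t => ∫ v in Ioi t, Real.exp (-v^2/2)) := by
    intro s t hst
    exact setIntegral_mono_set (hexp_int s)
      (Filter.Eventually.of_forall fun v => (Real.exp_pos _).le)
      (HasSubset.Subset.eventuallyLE (Ioi_subset_Ioi hst))
  have hEmeas : Measurable (fun t => ∫ v in Ioi t, Real.exp (-v^2/2)) := hanti.measurable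
  have hg_meas : Measurable (fun x : ℝ =>
      ((m:ℝ)+1) * x^m * ∫ v in Ioi (Real.sqrt (a*x)), Real.exp (-v^2/2)) :=
    (measurable_const.mul (measurable_id.pow_const m)).mul
      (hEmeas.comp (Real.continuous_sqrt.measurable.comp (measurable_const_mul a)))
  have hWmeas : Measurable W :=
    ENNReal.measurable_ofReal.comp (by fun_prop)
  have hΦmeas : Measurable Φ :=
    ENNReal.measurable_ofReal.comp (measurable_const.mul (measurable_id.pow_const m))
  -- step 1 : Bochner to lintegral
  rw [MeasureTheory.integral_eq_lintegral_of_nonneg_ae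
      ((ae_restrict_iff' measurableSet_Ioi).2 (Filter.Eventually.of_forall fun x hx =>
        mul_nonneg (mul_nonneg (by positivity) (pow_nonneg (le_of_lt hx) m)) (hE0 _)))
      hg_meas.aestronglyMeasurable]
  -- step 2 : swap
  have hF : AEMeasurable (Function.uncurry fun (x v : ℝ) => Φ x * (Ioi (Real.sqrt (a*x))).indicator W v)
      (((volume : Measure ℝ).restrict (Ioi 0)).prod ((volume : Measure ℝ).restrict (Ioi 0))) := by
    have hset : MeasurableSet {p : ℝ×ℝ | Real.sqrt (a*p.1) < p.2} :=
      measurableSet_lt ((Real.continuous_sqrt.comp (continuous_const.mul continuous_fst)).measurable)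
        measurable_snd
    have heq : (Function.uncurry fun (x v : ℝ) => Φ x * (Ioi (Real.sqrt (a*x))).indicator W v)
        = fun p : ℝ×ℝ => Φ p.1 * ({p : ℝ×ℝ | Real.sqrt (a*p.1) < p.2}.indicator (fun q => W q.2) p) := by
      funext p
      simp [Function.uncurry, Set.indicator_apply, Set.mem_Ioi, Set.mem_setOf_eq]
    rw [heq]
    exact ((hΦmeas.comp measurable_fst).mul ((hWmeas.comp measurable_snd).indicator hset)).aemeasurable
  have hswap : (∫⁻ x in Ioi (0:ℝ), ENNReal.ofReal
        (((m:ℝ)+1) * x^m * ∫ v in Ioi (Real.sqrt (a*x)), Real.exp (-v^2/2)))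
      = ∫⁻ v in Ioi (0:ℝ), ∫⁻ x in Ioi (0:ℝ), Φ x * (Ioi (Real.sqrt (a*x))).indicator W v := by
    rw [← MeasureTheory.lintegral_lintegral_swap hF]
    refine setLIntegral_congr_fun measurableSet_Ioi (fun x hx => ?_)
    have h1 : ENNReal.ofReal (((m:ℝ)+1) * x^m * ∫ v in Ioi (Real.sqrt (a*x)), Real.exp (-v^2/2))
        = Φ x * ∫⁻ v in Ioi (Real.sqrt (a*x)), W v := by
      rw [ENNReal.ofReal_mul (mul_nonneg (by positivity) (pow_nonneg (le_of_lt hx) m)),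
        MeasureTheory.ofReal_integral_eq_lintegral_ofReal (hexp_int _)
          (Filter.Eventually.of_forall fun v => (Real.exp_pos _).le)]
    rw [h1]
    have h2 : (∫⁻ v in Ioi (Real.sqrt (a*x)), W v)
        = ∫⁻ v in Ioi (0:ℝ), (Ioi (Real.sqrt (a*x))).indicator W v := by
      rw [lintegral_indicator measurableSet_Ioi, Measure.restrict_restrict measurableSet_Ioi,
        Set.inter_eq_left.mpr (Ioi_subset_Ioi (Real.sqrt_nonneg _))]
    rw [h2, ← lintegral_const_mul' _ _ ENNReal.ofReal_ne_top]
  rw [hswap]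
  -- step 3 : inner integral
  have hinner : ∀ v ∈ Ioi (0:ℝ), (∫⁻ x in Ioi (0:ℝ), Φ x * (Ioi (Real.sqrt (a*x))).indicator W v)
      = ENNReal.ofReal (Real.exp (-v^2/2) * (v^2/a)^(m+1)) := by
    intro v hv
    have hv' : (0:ℝ) < v := hv
    have hb : 0 < v^2/a := by positivity
    have h1 : ∀ x ∈ Ioi (0:ℝ), Φ x * (Ioi (Real.sqrt (a*x))).indicator W v
        = (Iio (v^2/a)).indicator (fun x => Φ x * W v) x := by
      intro x hx
      have hiff : Real.sqrt (a*x) < v ↔ x < v^2/a := by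
        rw [Real.sqrt_lt' hv', lt_div_iff₀' ha]
      simp only [Set.indicator_apply, Set.mem_Ioi, Set.mem_Iio, hiff]
      by_cases h : x < v^2/a
      · simp [h]
      · simp [h]
    rw [setLIntegral_congr_fun measurableSet_Ioi h1,
      lintegral_indicator measurableSet_Iio, Measure.restrict_restrict measurableSet_Iio,
      show Iio (v^2/a) ∩ Ioi 0 = Ioo 0 (v^2/a) from by rw [Set.inter_comm, Set.Ioi_inter_Iio],
      lintegral_mul_const' _ _ ENNReal.ofReal_ne_top]
    have hpolyint : IntegrableOn (fun x : ℝ => ((m:ℝ)+1) * x^m) (Ioo 0 (v^2/a)) :=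
      ((continuous_const.mul (continuous_pow m)).integrableOn_Icc).mono_set Ioo_subset_Icc_self
    have hpoly : ∫ x in Ioo (0:ℝ) (v^2/a), ((m:ℝ)+1) * x^m = (v^2/a)^(m+1) := by
      rw [← integral_Ioc_eq_integral_Ioo, ← intervalIntegral.integral_of_le hb.le,
          intervalIntegral.integral_const_mul, integral_pow]
      have : ((m:ℝ)+1) ≠ 0 := by positivity
      field_simp
      ring
    have hΦint : (∫⁻ x in Ioo (0:ℝ) (v^2/a), Φ x) = ENNReal.ofReal ((v^2/a)^(m+1)) := by
      rw [hΦ, ← MeasureTheory.ofReal_integral_eq_lintegral_ofReal hpolyint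
        ((ae_restrict_iff' measurableSet_Ioo).2 (Filter.Eventually.of_forall fun x hx =>
          mul_nonneg (by positivity) (pow_nonneg hx.1.le m))), hpoly]
    rw [hΦint, ENNReal.ofReal_mul (Real.exp_pos _).le, mul_comm]
  rw [setLIntegral_congr_fun measurableSet_Ioi hinner]
  -- step 4 : outer integral
  have hint : IntegrableOn (fun v : ℝ => Real.exp (-v^2/2) * (v^2/a)^(m+1)) (Ioi 0) := by
    have h0 := integrableOn_rpow_mul_exp_neg_mul_sq (b := (1/2:ℝ)) (by norm_num)
      (s := ((2*m+2 : ℕ):ℝ)) (by have := Nat.cast_nonneg (α := ℝ) (2*m+2); linarith)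
    have h1 : IntegrableOn (fun x : ℝ => x^(2*m+2) * Real.exp (-x^2/2)) (Ioi 0) := by
      refine h0.congr_fun (fun x hx => ?_) measurableSet_Ioi
      beta_reduce
      rw [Real.rpow_natCast]
      norm_num [neg_div]
      left
      ring_nf
    have h2 : IntegrableOn (fun x : ℝ => 1/a^(m+1) * (x^(2*m+2) * Real.exp (-x^2/2))) (Ioi 0) :=
      h1.const_mul (1/a^(m+1))
    refine h2.congr_fun (fun x hx => ?_) measurableSet_Ioi
    rw [div_pow, ← pow_mul, show 2*(m+1) = 2*m+2 from by ring]
    ring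
  rw [← MeasureTheory.ofReal_integral_eq_lintegral_ofReal hint
    ((ae_restrict_iff' measurableSet_Ioi).2 (Filter.Eventually.of_forall fun v hv =>
      mul_nonneg (Real.exp_pos _).le (by positivity)))]
  have hval : ∫ v in Ioi (0:ℝ), Real.exp (-v^2/2) * (v^2/a)^(m+1)
      = Real.sqrt (2*Real.pi) * (Nat.doubleFactorial (2*m+1) : ℝ) / (2 * a^(m+1)) := by
    have hptw : ∀ x ∈ Ioi (0:ℝ), Real.exp (-x^2/2) * (x^2/a)^(m+1)
        = (1/a^(m+1)) * (x^(2*m+2) * Real.exp (-x^2/2)) := by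
      intro x hx
      rw [div_pow, ← pow_mul, show 2*(m+1) = 2*m+2 from by ring]
      ring
    rw [setIntegral_congr_fun measurableSet_Ioi hptw, MeasureTheory.integral_const_mul _ _,
      aux_moment m]
    have hA : (0:ℝ) < a^(m+1) := by positivity
    field_simp
  rw [hval, ENNReal.toReal_ofReal (by positivity)]


/-- The Gaussian Q-function. -/
noncomputable def gaussQ (z : ℝ) : ℝ :=
  (1 / Real.sqrt (2 * Real.pi)) * ∫ v in Set.Ioi z, Real.exp (-v^2/2)

theorem stmt_6 (N : ℕ) (hN : 0 < N) (D p k γ : ℝ)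
    (hD : 0 < D) (hp : 0 < p) (hk : 0 < k) (hγ : 0 < γ) :
    p * ∫ x in Set.Ioi (0:ℝ), (N * x^(N-1) / D) * gaussQ (Real.sqrt (k * x * γ)) =
      p * (Nat.doubleFactorial (2*N-1) : ℝ) / (2 * D * (k*γ)^N) := by
  obtain ⟨m, rfl⟩ : ∃ m, N = m + 1 := ⟨N - 1, by omega⟩
  have ha : 0 < k * γ := mul_pos hk hγ
  have hre : ∀ x : ℝ, (((m+1:ℕ):ℝ) * x^((m+1)-1) / D) * gaussQ (Real.sqrt (k*x*γ))
      = (1/(D * Real.sqrt (2*Real.pi))) *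
        (((m:ℝ)+1) * x^m * ∫ v in Ioi (Real.sqrt ((k*γ)*x)), Real.exp (-v^2/2)) := by
    intro x
    simp only [gaussQ, Nat.add_sub_cancel]
    rw [show k*x*γ = (k*γ)*x by ring]
    push_cast
    ring
  rw [show (∫ x in Ioi (0:ℝ), (((m+1:ℕ):ℝ) * x^((m+1)-1) / D) * gaussQ (Real.sqrt (k*x*γ)))
      = ∫ x in Ioi (0:ℝ), (1/(D * Real.sqrt (2*Real.pi))) *
        (((m:ℝ)+1) * x^m * ∫ v in Ioi (Real.sqrt ((k*γ)*x)), Real.exp (-v^2/2)) from by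
      simp_rw [hre],
    MeasureTheory.integral_const_mul _ _, aux_key m ha,
    show (2*(m+1)-1 : ℕ) = 2*m+1 by omega]
  have hπ : (0:ℝ) < Real.sqrt (2*Real.pi) := Real.sqrt_pos.2 (by positivity)
  have hs2 : Real.sqrt (2*Real.pi) * Real.sqrt (2*Real.pi) = 2*Real.pi := Real.mul_self_sqrt (by positivity)
  have hkγ : (0:ℝ) < (k*γ)^(m+1) := by positivity
  field_simp
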